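/- For n ≥ 3, the monoid S_n(Sym_n) is not cancellative, and for n ≥ 4 the monoid S_n(Alt_n) is not cancellative. -/

import Mathlib

/-- The word `a_{σ(1)} ⋯ a_{σ(n)}` in the free monoid on `n` generators. -/
def permWord {n : ℕ} (σ : Equiv.Perm (Fin n)) : FreeMonoid (Fin n) :=
  FreeMonoid.ofList (List.ofFn fun i => σ i)

/-- The defining relations of `S_n(H)`. -/
def snRel (n : ℕ) (H : Set (Equiv.Perm (Fin n)))
    (a b : FreeMonoid (Fin n)) : Prop :=
  ∃ σ ∈ H, a = permWord 1 ∧ b = permWord σ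

/-- The congruence generated by the relations of `S_n(H)`. -/
def snCon (n : ℕ) (H : Set (Equiv.Perm (Fin n))) : Con (FreeMonoid (Fin n)) :=
  conGen (snRel n H)

/-- The monoid `S_n(H)` presented by `a_1,…,a_n` with relations
`a_1⋯a_n = a_{σ(1)}⋯a_{σ(n)}` for `σ ∈ H`. -/
abbrev SnMonoid (n : ℕ) (H : Set (Equiv.Perm (Fin n))) : Type :=
  (snCon n H).Quotient

/-- The canonical projection `π : FM_n → S_n(H)`. -/
def snPi (n : ℕ) (H : Set (Equiv.Perm (Fin n))) :
    FreeMonoid (Fin n) →* SnMonoid n H :=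
  (snCon n H).mk'

/-- The generator `a_i` of `S_n(H)`. -/
def aGen (n : ℕ) (H : Set (Equiv.Perm (Fin n))) (i : Fin n) : SnMonoid n H :=
  snPi n H (FreeMonoid.of i)

/-- The element `z = a_1 a_2 ⋯ a_n` of `S_n(H)`. -/
def zElem (n : ℕ) (H : Set (Equiv.Perm (Fin n))) : SnMonoid n H :=
  snPi n H (permWord 1)

/-- A (two-sided) ideal-like subset `I` of a monoid is prime if for all `u, v ∉ I`
there is `s` with `u * s * v ∉ I`. -/
def MonoidIdeal.IsPrime {M : Type*} [Monoid M] (I : Set M) : Prop :=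
  ∀ u v : M, u ∉ I → v ∉ I → ∃ s : M, u * s * v ∉ I


lemma lenOfList {α : Type*} (l : List α) : (FreeMonoid.ofList l).length = l.length := rfl

/-- A congruence witnessing that `snCon` only relates words of length `≥ n`. -/
def lenCon (m : ℕ) : Con (FreeMonoid (Fin (m+1))) where
  r a b := a = b ∨ (a.length = b.length ∧ m + 1 ≤ a.length)
  iseqv := by
    refine ⟨fun a => Or.inl rfl, ?_, ?_⟩
    · rintro a b (rfl | ⟨h1, h2⟩)
      · exact Or.inl rfl
      · exact Or.inr ⟨h1.symm, h1 ▸ h2⟩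
    · rintro a b c (rfl | ⟨h1, h2⟩) (rfl | ⟨h3, h4⟩)
      · exact Or.inl rfl
      · exact Or.inr ⟨h3, h4⟩
      · exact Or.inr ⟨h1, h2⟩
      · exact Or.inr ⟨h1.trans h3, h2⟩
  mul' := by
    rintro a b c d (rfl | ⟨h1, h2⟩) (rfl | ⟨h3, h4⟩)
    · exact Or.inl rfl
    · exact Or.inr ⟨by simp [FreeMonoid.length_mul, h3], by simp [FreeMonoid.length_mul]; omega⟩
    · exact Or.inr ⟨by simp [FreeMonoid.length_mul, h1], by simp [FreeMonoid.length_mul]; omega⟩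
    · exact Or.inr ⟨by simp [FreeMonoid.length_mul, h1, h3], by simp [FreeMonoid.length_mul]; omega⟩

lemma snAux (m : ℕ) (H : Set (Equiv.Perm (Fin (m+1)))) (σ : Equiv.Perm (Fin (m+1)))
    (hσ : σ ∈ H) (h0 : σ 0 = 0) (j : Fin m) (hj : σ j.succ ≠ j.succ) :
    ¬ (∀ a b c : SnMonoid (m+1) H,
      (a * b = a * c → b = c) ∧ (b * a = c * a → b = c)) := by
  intro hcanc
  set t1 : FreeMonoid (Fin (m+1)) :=
    FreeMonoid.ofList (List.ofFn fun i : Fin m => i.succ) with ht1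
  set t2 : FreeMonoid (Fin (m+1)) :=
    FreeMonoid.ofList (List.ofFn fun i : Fin m => σ i.succ) with ht2
  have h1 : FreeMonoid.of (0 : Fin (m+1)) * t1 = permWord 1 := by
    apply FreeMonoid.toList.injective
    simp [ht1, permWord, List.ofFn_succ, Fin.succ]
  have h2 : FreeMonoid.of (0 : Fin (m+1)) * t2 = permWord σ := by
    apply FreeMonoid.toList.injective
    simp [ht2, permWord, List.ofFn_succ, h0]
  have hz : snPi (m+1) H (permWord 1) = snPi (m+1) H (permWord σ) :=
    (Con.eq _).mpr (ConGen.Rel.of _ _ ⟨σ, hσ, rfl, rfl⟩)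
  have hmul : aGen (m+1) H 0 * snPi (m+1) H t1 = aGen (m+1) H 0 * snPi (m+1) H t2 := by
    rw [aGen, ← map_mul, ← map_mul, h1, h2, hz]
  have heq : snPi (m+1) H t1 = snPi (m+1) H t2 :=
    (hcanc (aGen (m+1) H 0) (snPi (m+1) H t1) (snPi (m+1) H t2)).1 hmul
  have hcon : snCon (m+1) H t1 t2 := (Con.eq _).mp heq
  have hle : snCon (m+1) H ≤ lenCon m := by
    apply Con.conGen_le.mpr
    rintro a b ⟨τ, hτ, rfl, rfl⟩
    exact Or.inr ⟨by simp [permWord, lenOfList], by simp [permWord, lenOfList]⟩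
  have := hle hcon
  rcases this with h | ⟨_, hlen⟩
  · have : (List.ofFn fun i : Fin m => i.succ) = List.ofFn fun i : Fin m => σ i.succ :=
      FreeMonoid.ofList.injective h
    have := List.ofFn_inj.mp this
    exact hj (congrFun this j).symm
  · rw [ht1, lenOfList, List.length_ofFn] at hlen
    omega

theorem stmt19 (n : ℕ) :
    (3 ≤ n → ¬ (∀ a b c : SnMonoid n ↑(⊤ : Subgroup (Equiv.Perm (Fin n))),
      (a * b = a * c → b = c) ∧ (b * a = c * a → b = c))) ∧
    (4 ≤ n → ¬ (∀ a b c : SnMonoid n ↑(alternatingGroup (Fin n)),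
      (a * b = a * c → b = c) ∧ (b * a = c * a → b = c))) := by
  constructor
  · intro hn
    obtain ⟨m, rfl⟩ : ∃ m, n = m + 1 := ⟨n - 1, by omega⟩
    have h12 : (⟨1, by omega⟩ : Fin (m+1)) ≠ ⟨2, by omega⟩ := by simp [Fin.ext_iff]
    refine snAux m _ (Equiv.swap ⟨1, by omega⟩ ⟨2, by omega⟩) (by simp) ?_ ⟨0, by omega⟩ ?_
    · exact Equiv.swap_apply_of_ne_of_ne (by simp [Fin.ext_iff]) (by simp [Fin.ext_iff])
    · show Equiv.swap _ _ (Fin.succ ⟨0, _⟩) ≠ _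
      have : Fin.succ (⟨0, by omega⟩ : Fin m) = (⟨1, by omega⟩ : Fin (m+1)) := rfl
      rw [this, Equiv.swap_apply_left]
      simp [Fin.ext_iff]
  · intro hn
    obtain ⟨m, rfl⟩ : ∃ m, n = m + 1 := ⟨n - 1, by omega⟩
    have h12 : (⟨1, by omega⟩ : Fin (m+1)) ≠ ⟨2, by omega⟩ := by simp [Fin.ext_iff]
    have h13 : (⟨1, by omega⟩ : Fin (m+1)) ≠ ⟨3, by omega⟩ := by simp [Fin.ext_iff]
    refine snAux m _ (Equiv.swap ⟨1, by omega⟩ ⟨2, by omega⟩ * Equiv.swap ⟨1, by omega⟩ ⟨3, by omega⟩)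
      ?_ ?_ ⟨2, by omega⟩ ?_
    · show _ ∈ alternatingGroup (Fin (m+1))
      rw [Equiv.Perm.mem_alternatingGroup]
      simp [Equiv.Perm.sign_swap, h12, h13]
    · have e1 : Equiv.swap (⟨1, by omega⟩ : Fin (m+1)) ⟨3, by omega⟩ 0 = 0 :=
        Equiv.swap_apply_of_ne_of_ne (by simp [Fin.ext_iff]) (by simp [Fin.ext_iff])
      have e2 : Equiv.swap (⟨1, by omega⟩ : Fin (m+1)) ⟨2, by omega⟩ 0 = 0 :=
        Equiv.swap_apply_of_ne_of_ne (by simp [Fin.ext_iff]) (by simp [Fin.ext_iff])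
      rw [Equiv.Perm.mul_apply, e1, e2]
    · simp only [Equiv.Perm.mul_apply]
      have : Fin.succ (⟨2, by omega⟩ : Fin m) = (⟨3, by omega⟩ : Fin (m+1)) := rfl
      rw [this, Equiv.swap_apply_right, Equiv.swap_apply_left]
      simp [Fin.ext_iff]
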